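/- The two Choi maps are related by unitary automorphisms: φ_{C₁} = U(3π/2) ∘ φ_{C₂} ∘ U(π/2), where U(θ) acts as X ↦ U(θ) X U(θ)† with U(θ) the rotation matrix [[cos θ, 0, sin θ], [0, 1, 0], [−sin θ, 0, cos θ]]. -/

import Mathlib

/-! Since `U(3π/2) = U(π/2)†`, the right-hand side is `W† φ_{C₂}(W X W†) W` for `W = U(π/2)`.
Conjugation by `W` is a signed permutation swapping the first and third coordinates: it commutes
with negating the off-diagonal entries and turns the diagonal pairing `(0,2), (1,0), (2,1)` of
`φ_{C₂}` into the pairing `(0,1), (1,2), (2,0)` of `φ_{C₁}`. -/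

open Matrix ComplexOrder

/-- The Choi map `φ_{C₁}` on `M₃(ℂ)`. -/
noncomputable def choi1 (x : Matrix (Fin 3) (Fin 3) ℂ) : Matrix (Fin 3) (Fin 3) ℂ :=
  (1 / 2 : ℂ) •
    !![x 0 0 + x 1 1, -x 0 1, -x 0 2;
       -x 1 0, x 1 1 + x 2 2, -x 1 2;
       -x 2 0, -x 2 1, x 2 2 + x 0 0]

/-- The Choi map `φ_{C₂}` on `M₃(ℂ)`. -/
noncomputable def choi2 (x : Matrix (Fin 3) (Fin 3) ℂ) : Matrix (Fin 3) (Fin 3) ℂ :=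
  (1 / 2 : ℂ) •
    !![x 0 0 + x 2 2, -x 0 1, -x 0 2;
       -x 1 0, x 1 1 + x 0 0, -x 1 2;
       -x 2 0, -x 2 1, x 2 2 + x 1 1]

/-- The rotation matrix `U(θ)`. -/
noncomputable def rotU (θ : ℝ) : Matrix (Fin 3) (Fin 3) ℂ :=
  !![(Real.cos θ : ℂ), 0, (Real.sin θ : ℂ);
     0, 1, 0;
     (-Real.sin θ : ℂ), 0, (Real.cos θ : ℂ)]

open Real

lemma rotU_neg (θ : ℝ) : rotU (-θ) = (rotU θ)ᴴ := by
  ext i j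
  fin_cases i <;> fin_cases j <;> simp [rotU, ← Complex.cos_conj, ← Complex.sin_conj]

lemma rotU_add_two_pi (θ : ℝ) : rotU (θ + 2 * π) = rotU θ := by
  simp only [rotU, cos_add_two_pi, sin_add_two_pi]

lemma rotU_three_pi_div_two : rotU (3 * π / 2) = (rotU (π / 2))ᴴ := by
  rw [show 3 * π / 2 = -(π / 2) + 2 * π by ring, rotU_add_two_pi, rotU_neg]

lemma rotU_pi_div_two : rotU (π / 2) = !![0, 0, 1; 0, 1, 0; -1, 0, 0] := by
  simp [rotU]

lemma rotU_pi_div_two_mul_mul_conjTranspose (X : Matrix (Fin 3) (Fin 3) ℂ) :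
    rotU (π / 2) * X * (rotU (π / 2))ᴴ =
      !![X 2 2, X 2 1, -X 2 0; X 1 2, X 1 1, -X 1 0; -X 0 2, -X 0 1, X 0 0] := by
  rw [rotU_pi_div_two]
  ext i j
  fin_cases i <;> fin_cases j <;> simp [mul_apply, vecMul, dotProduct, Fin.sum_univ_three]

lemma conjTranspose_rotU_pi_div_two_mul_mul (Y : Matrix (Fin 3) (Fin 3) ℂ) :
    (rotU (π / 2))ᴴ * Y * rotU (π / 2) =
      !![Y 2 2, -Y 2 1, -Y 2 0; -Y 1 2, Y 1 1, Y 1 0; -Y 0 2, Y 0 1, Y 0 0] := by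
  rw [rotU_pi_div_two]
  ext i j
  fin_cases i <;> fin_cases j <;> simp [mul_apply, Fin.sum_univ_three]

theorem choi1_eq_conj_choi2 :
    ∀ X : Matrix (Fin 3) (Fin 3) ℂ,
      choi1 X =
        rotU (3 * Real.pi / 2) *
          choi2 (rotU (Real.pi / 2) * X * (rotU (Real.pi / 2))ᴴ) *
            (rotU (3 * Real.pi / 2))ᴴ := by
  intro X
  rw [rotU_three_pi_div_two, conjTranspose_conjTranspose, rotU_pi_div_two_mul_mul_conjTranspose,
    conjTranspose_rotU_pi_div_two_mul_mul]
  ext i j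
  fin_cases i <;> fin_cases j <;> simp [choi1, choi2, add_comm]
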